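/- Stabilization of the contraction under tensoring with the identity: Let T : M_d → M_d be a quantum channel with peripheral projection T_φ, and let id denote the identity channel on M_{d'}. Then, with (T ⊗ id)_φ = T_φ ⊗ id, one has η_tr[T ⊗ id] = sup_{ρ ∈ S_{dd'}} d_tr((T ⊗ id)(ρ), (T_φ ⊗ id)(ρ)) ≤ 4d · η_tr[T]. -/

import Mathlib

open scoped Matrix ComplexOrder
open Matrix

section Defs

variable {m : Type*}

/-- The square root of a positive semidefinite matrix, as defined in Mathlib (Dec 2024). -/
noncomputable def Matrix.PosSemidef.sqrt {𝕜 : Type*} [RCLike 𝕜] {n : Type*} [Fintype n]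
    [DecidableEq n] {A : Matrix n n 𝕜} (hA : A.PosSemidef) : Matrix n n 𝕜 :=
  hA.1.eigenvectorUnitary.1 * diagonal ((↑) ∘ (√·) ∘ hA.1.eigenvalues) *
    (star hA.1.eigenvectorUnitary : Matrix n n 𝕜)

/-- The trace norm `‖X‖₁ = tr √(XᴴX)`. -/
noncomputable def traceNorm [Fintype m] [DecidableEq m] (X : Matrix m m ℂ) : ℝ :=
  ((Matrix.posSemidef_conjTranspose_mul_self X).sqrt.trace).re

/-- The trace distance `d_tr(ρ,σ) = ‖ρ - σ‖₁ / 2`. -/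
noncomputable def trDist [Fintype m] [DecidableEq m] (ρ σ : Matrix m m ℂ) : ℝ :=
  traceNorm (ρ - σ) / 2

/-- A density matrix: positive semidefinite (hence Hermitian) with unit trace. -/
def IsDensityMatrix [Fintype m] (ρ : Matrix m m ℂ) : Prop :=
  ρ.PosSemidef ∧ ρ.trace = 1

/-- Apply a superoperator, given by its matrix representation
(rows/columns indexed by matrix entry positions), to a matrix. -/
noncomputable def appS [Fintype m] (S : Matrix (m × m) (m × m) ℂ) (ρ : Matrix m m ℂ) :
    Matrix m m ℂ :=
  Matrix.of fun i j => ∑ p : m × m, S (i, j) p * ρ p.1 p.2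

/-- The Choi matrix of a superoperator. -/
def choiMatrix [Fintype m] (S : Matrix (m × m) (m × m) ℂ) : Matrix (m × m) (m × m) ℂ :=
  Matrix.of fun p q => S (p.2, q.2) (p.1, q.1)

/-- Quantum channel: completely positive (positive semidefinite Choi matrix)
and trace preserving. -/
def IsQChannelM [Fintype m] (S : Matrix (m × m) (m × m) ℂ) : Prop :=
  (choiMatrix S).PosSemidef ∧ ∀ X : Matrix m m ℂ, (appS S X).trace = X.trace

/-- `expS t L` is the superoperator `e^{tL}`. -/
noncomputable def expS [Fintype m] [DecidableEq m] (t : ℝ) (L : Matrix (m × m) (m × m) ℂ) :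
    Matrix (m × m) (m × m) ℂ :=
  NormedSpace.exp ((t : ℂ) • L)

/-- A Liouvillian: `e^{tL}` is a quantum channel for every `t ≥ 0`. -/
def IsLiouvillianM [Fintype m] [DecidableEq m] (L : Matrix (m × m) (m × m) ℂ) : Prop :=
  ∀ t : ℝ, 0 ≤ t → IsQChannelM (expS t L)

/-- `lam` is the spectral gap of the Liouvillian `L`:
`lam = inf {|Re μ| : μ eigenvalue of L, Re μ < 0}` (and such an eigenvalue exists). -/
def IsGapOf [Fintype m] [DecidableEq m] (L : Matrix (m × m) (m × m) ℂ) (lam : ℝ) : Prop :=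
  (∃ μ ∈ spectrum ℂ L, μ.re < 0) ∧
  lam = sInf {r : ℝ | ∃ μ ∈ spectrum ℂ L, μ.re < 0 ∧ r = -μ.re}

/-- `Tφ` is the peripheral evolution `T_{φ,t} = Σ_{k : Re λ_k = 0} e^{tλ_k} P_k` of the
semigroup generated by `L`: it acts as `e^{tμ}` on each generalized eigenspace of `L` with
`Re μ = 0`, and as `0` on each generalized eigenspace with `Re μ < 0`. -/
def IsPeriphEvolAt [Fintype m] (L : Matrix (m × m) (m × m) ℂ) (t : ℝ)
    (Tφ : Matrix (m × m) (m × m) ℂ) : Prop :=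
  (∀ μ : ℂ, μ.re = 0 → ∀ v ∈ Module.End.maxGenEigenspace (Matrix.mulVecLin L) μ,
      Tφ.mulVec v = Complex.exp (t * μ) • v) ∧
  (∀ μ : ℂ, μ.re < 0 → ∀ v ∈ Module.End.maxGenEigenspace (Matrix.mulVecLin L) μ,
      Tφ.mulVec v = 0)

/-- `Tφ` is the peripheral projection `T_φ = Σ_{k : |μ_k| = 1} μ_k P_k` of the channel `T`:
it acts as `μ •` on each generalized eigenspace of `T` with `|μ| = 1`, and as `0` on each
generalized eigenspace with `|μ| < 1`. -/
def IsPeriphProjM [Fintype m] (T Tφ : Matrix (m × m) (m × m) ℂ) : Prop :=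
  (∀ μ : ℂ, ‖μ‖ = 1 → ∀ v ∈ Module.End.maxGenEigenspace (Matrix.mulVecLin T) μ,
      Tφ.mulVec v = μ • v) ∧
  (∀ μ : ℂ, ‖μ‖ < 1 → ∀ v ∈ Module.End.maxGenEigenspace (Matrix.mulVecLin T) μ,
      Tφ.mulVec v = 0)

/-- The trace-norm contraction `η_tr[T] = sup_ρ d_tr(T(ρ), Tφ(ρ))` over density matrices. -/
noncomputable def etaTR [Fintype m] [DecidableEq m] (T Tφ : Matrix (m × m) (m × m) ℂ) : ℝ :=
  ⨆ ρ : {ρ : Matrix m m ℂ // IsDensityMatrix ρ}, trDist (appS T ρ.1) (appS Tφ ρ.1)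

open scoped Classical in
/-- Matrix square root of a positive semidefinite matrix (junk value `0` otherwise). -/
noncomputable def msqrt [Fintype m] [DecidableEq m] (A : Matrix m m ℂ) : Matrix m m ℂ :=
  if h : A.PosSemidef then h.sqrt else 0

/-- The fidelity `F(ρ,σ) = tr √(√ρ σ √ρ)`. -/
noncomputable def fidelity [Fintype m] [DecidableEq m] (ρ σ : Matrix m m ℂ) : ℝ :=
  ((msqrt (msqrt ρ * σ * msqrt ρ)).trace).re

/-- The Bures distance `d_B(ρ,σ) = √(1 - F(ρ,σ))`. -/
noncomputable def buresDist [Fintype m] [DecidableEq m] (ρ σ : Matrix m m ℂ) : ℝ :=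
  Real.sqrt (1 - fidelity ρ σ)

/-- The Frobenius (Hilbert-Schmidt) norm `‖X‖₂ = √(tr XᴴX)`. -/
noncomputable def frobNorm [Fintype m] (X : Matrix m m ℂ) : ℝ :=
  Real.sqrt ((Xᴴ * X).trace.re)

/-- The operator (spectral) norm `‖A‖_∞`. -/
noncomputable def specNorm [Fintype m] [DecidableEq m] (A : Matrix m m ℂ) : ℝ :=
  ‖(Matrix.toEuclideanLin A).toContinuousLinearMap‖

/-- The superoperator norm `‖S‖_{2→2} = sup {‖S(X)‖₂ : ‖X‖₂ ≤ 1}` induced by the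
Frobenius norm. -/
noncomputable def superNorm22 [Fintype m] (S : Matrix (m × m) (m × m) ℂ) : ℝ :=
  ⨆ X : {X : Matrix m m ℂ // frobNorm X ≤ 1}, frobNorm (appS S X.1)

/-- The dual (Heisenberg-picture) superoperator `S*`, satisfying
`tr[A S*(B)] = tr[S(A) B]`. -/
def dualS [Fintype m] (S : Matrix (m × m) (m × m) ℂ) : Matrix (m × m) (m × m) ℂ :=
  Matrix.of fun p q => S (q.2, q.1) (p.2, p.1)

/-- Matrix representation of the superoperator `ρ ↦ A ρ B`. -/
def sandwichS [Fintype m] (A B : Matrix m m ℂ) : Matrix (m × m) (m × m) ℂ :=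
  Matrix.of fun p q => A p.1 q.1 * B q.2 p.2

/-- The Lindblad dissipator `ρ ↦ L ρ L† − (1/2)L†L ρ − (1/2)ρ L†L` in matrix
representation. -/
noncomputable def lindbladTermS [Fintype m] [DecidableEq m] (L : Matrix m m ℂ) :
    Matrix (m × m) (m × m) ℂ :=
  sandwichS L Lᴴ - (1 / 2 : ℂ) • sandwichS (Lᴴ * L) 1 - (1 / 2 : ℂ) • sandwichS 1 (Lᴴ * L)

/-- Tensor (Kronecker) product of two superoperators. -/
def kronS {m' : Type*} [Fintype m] [Fintype m'] (S : Matrix (m × m) (m × m) ℂ)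
    (S' : Matrix (m' × m') (m' × m') ℂ) :
    Matrix ((m × m') × (m × m')) ((m × m') × (m × m')) ℂ :=
  Matrix.of fun p q =>
    S (p.1.1, p.2.1) (q.1.1, q.2.1) * S' (p.1.2, p.2.2) (q.1.2, q.2.2)

end Defs

/-- `n`-fold tensor power `S^{⊗n}` of a superoperator on `M_d`. -/
noncomputable def tensorPowS (n : ℕ) {d : ℕ} (S : Matrix (Fin d × Fin d) (Fin d × Fin d) ℂ) :
    Matrix ((Fin n → Fin d) × (Fin n → Fin d)) ((Fin n → Fin d) × (Fin n → Fin d)) ℂ :=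
  Matrix.of fun p q => ∏ i, S (p.1 i, p.2 i) (q.1 i, q.2 i)

/-- `n`-fold tensor power `ρ^{⊗n}` of a matrix. -/
noncomputable def tensorPowM (n : ℕ) {d : ℕ} (ρ : Matrix (Fin d) (Fin d) ℂ) :
    Matrix (Fin n → Fin d) (Fin n → Fin d) ℂ :=
  Matrix.of fun x y => ∏ i, ρ (x i) (y i)

/-- Tensor product `A 0 ⊗ A 1 ⊗ … ⊗ A (n-1)` of a family of matrices. -/
noncomputable def tensorFamilyM {n d : ℕ} (A : Fin n → Matrix (Fin d) (Fin d) ℂ) :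
    Matrix (Fin n → Fin d) (Fin n → Fin d) ℂ :=
  Matrix.of fun x y => ∏ i, A i (x i) (y i)

/-!
Write `Δ = T - Tφ`. If `ρ` has blocks `X i j = ρ.submatrix (i, ·) (j, ·)`, then
`(Δ ⊗ id)(ρ) = ∑ i j, Δ(E i j) ⊗ X i j` for the matrix units `E i j`, so the trace distance is
at most `(1/2) ∑ i j, ‖Δ(E i j)‖₁ ‖X i j‖₁`. By polarization, `4 X i j` is a combination of the four
compressions `X i i + X j j + ω X i j + ω̄ X j i` (`ω ∈ {±1, ±I}`) of `ρ`, which are positive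
and whose traces add up to `4 (tr X i i + tr X j j)`; hence `‖X i j‖₁ ≤ tr X i i + tr X j j`. The
same argument, run on the positive matrix `∑ i j, E i j ⊗ E i j` whose blocks are the `E i j`,
gives `‖Δ(E i j)‖₁ ≤ 4 η_tr[T]`. Summing `tr X i i + tr X j j` over all `d²` pairs gives `2d`.

The triangle inequality for the trace norm comes from the polar decomposition `A = W |A|` with
`‖W‖ ≤ 1`, which turns `‖A‖₁` into `max_{‖W‖ ≤ 1} Re tr (Wᴴ A)`.
-/

section TraceNorm

open scoped MatrixOrder Matrix.Norms.L2Operator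

variable {n : Type*} [Fintype n] [DecidableEq n]

lemma Matrix.PosSemidef.sqrt_eq_cfcSqrt {A : Matrix n n ℂ} (hA : A.PosSemidef) :
    hA.sqrt = CFC.sqrt A := by
  rw [CFC.sqrt_eq_cfc, cfc_nnreal_eq_real _ A, hA.1.cfc_eq, Matrix.IsHermitian.cfc,
    Unitary.conjStarAlgAut_apply, Matrix.PosSemidef.sqrt]
  congr 3
  funext i
  simp [hA.eigenvalues_nonneg i]

lemma traceNorm_eq_re_trace_cfcSqrt (X : Matrix n n ℂ) :
    traceNorm X = (CFC.sqrt (Xᴴ * X)).trace.re := by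
  rw [traceNorm, (posSemidef_conjTranspose_mul_self X).sqrt_eq_cfcSqrt]

lemma traceNorm_eq_re_trace_of_mul_self {X P : Matrix n n ℂ} (hP : P.PosSemidef)
    (h : P * P = Xᴴ * X) : traceNorm X = P.trace.re := by
  rw [traceNorm_eq_re_trace_cfcSqrt, CFC.sqrt_unique h hP.nonneg]

lemma traceNorm_eq_re_trace {A : Matrix n n ℂ} (hA : A.PosSemidef) :
    traceNorm A = A.trace.re :=
  traceNorm_eq_re_trace_of_mul_self hA (by rw [hA.1.eq])

lemma traceNorm_nonneg (A : Matrix n n ℂ) : 0 ≤ traceNorm A := by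
  rw [traceNorm_eq_re_trace_cfcSqrt]
  exact (Complex.nonneg_iff.mp (CFC.sqrt_nonneg _).posSemidef.trace_nonneg).1

lemma traceNorm_smul (c : ℂ) (A : Matrix n n ℂ) : traceNorm (c • A) = ‖c‖ * traceNorm A := by
  set P := CFC.sqrt (Aᴴ * A)
  have hP : P.PosSemidef := (CFC.sqrt_nonneg _).posSemidef
  have hcP : ((‖c‖ : ℂ) • P).PosSemidef := hP.smul (by positivity)
  rw [traceNorm_eq_re_trace_of_mul_self hcP, traceNorm_eq_re_trace_cfcSqrt, trace_smul]
  · simp [P]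
  · rw [smul_mul_smul_comm, CFC.sqrt_mul_sqrt_self _ (posSemidef_conjTranspose_mul_self A).nonneg,
      conjTranspose_smul, smul_mul_smul_comm, ← sq, ← Complex.conj_mul']
    rfl

open Kronecker in
lemma traceNorm_kronecker {m : Type*} [Fintype m] [DecidableEq m]
    (A : Matrix n n ℂ) (B : Matrix m m ℂ) :
    traceNorm (A ⊗ₖ B) = traceNorm A * traceNorm B := by
  have hA := (CFC.sqrt_nonneg (Aᴴ * A)).posSemidef
  have hB := (CFC.sqrt_nonneg (Bᴴ * B)).posSemidef
  rw [traceNorm_eq_re_trace_of_mul_self (hA.kronecker hB), trace_kronecker,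
    traceNorm_eq_re_trace_cfcSqrt, traceNorm_eq_re_trace_cfcSqrt, Complex.mul_re,
    (Complex.nonneg_iff.mp hA.trace_nonneg).2.symm, zero_mul, sub_zero]
  · rw [← mul_kronecker_mul, CFC.sqrt_mul_sqrt_self _ (posSemidef_conjTranspose_mul_self A).nonneg,
      CFC.sqrt_mul_sqrt_self _ (posSemidef_conjTranspose_mul_self B).nonneg,
      conjTranspose_kronecker, mul_kronecker_mul]

lemma norm_apply_le_l2_opNorm (M : Matrix n n ℂ) (i j : n) : ‖M i j‖ ≤ ‖M‖ := by
  have hcol := M.l2_opNorm_mulVec (EuclideanSpace.single j 1)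
  simp only [PiLp.ofLp_single, mulVec_single, MulOpposite.op_one, one_smul,
    PiLp.continuousLinearEquiv_symm_apply, PiLp.norm_single, norm_one, mul_one] at hcol
  exact (PiLp.norm_apply_le (WithLp.toLp 2 (M.col j)) i).trans hcol

lemma exists_polar_of_conjTranspose_mul_self_eq_diagonal {B : Matrix n n ℂ} {σ : n → ℝ}
    (hB : Bᴴ * B = diagonal fun i => (σ i : ℂ) * σ i) :
    ∃ V : Matrix n n ℂ, ‖V‖ ≤ 1 ∧ B = V * diagonal (fun i => (σ i : ℂ)) ∧
      Vᴴ * B = diagonal fun i => (σ i : ℂ) := by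
  -- `(σ i)⁻¹ = 0` when `σ i = 0`, so `V` rescales the (orthogonal) columns of `B` to unit
  -- length and kills the zero ones.
  set V := B * diagonal fun i => (σ i : ℂ)⁻¹
  have hVB : Vᴴ * B = diagonal fun i => (σ i : ℂ) := by
    rw [conjTranspose_mul, diagonal_conjTranspose, Matrix.mul_assoc, hB, diagonal_mul_diagonal]
    congr 1; funext i
    by_cases hσ : (σ i : ℂ) = 0 <;> simp [hσ]
  refine ⟨V, ?_, ?_, hVB⟩
  · have hVV : Vᴴ * V = diagonal fun i => (σ i : ℂ) * (σ i : ℂ)⁻¹ := by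
      rw [← diagonal_mul_diagonal, ← hVB, Matrix.mul_assoc]
    have hsq : ‖V‖ * ‖V‖ ≤ 1 := by
      rw [← l2_opNorm_conjTranspose_mul_self, hVV, l2_opNorm_diagonal]
      refine pi_norm_le_iff_of_nonneg zero_le_one |>.mpr fun i => ?_
      by_cases hσ : (σ i : ℂ) = 0 <;> simp [hσ]
    nlinarith [norm_nonneg V]
  · have hker : B * (1 - diagonal fun i => (σ i : ℂ)⁻¹ * σ i) = 0 := by
      rw [← conjTranspose_mul_self_eq_zero, ← diagonal_one, diagonal_sub, conjTranspose_mul,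
        diagonal_conjTranspose, Matrix.mul_assoc, ← Matrix.mul_assoc Bᴴ, hB,
        diagonal_mul_diagonal, diagonal_mul_diagonal, diagonal_eq_zero]
      funext i
      by_cases hσ : (σ i : ℂ) = 0 <;> simp [hσ]
    rw [Matrix.mul_sub, Matrix.mul_one, sub_eq_zero] at hker
    rw [Matrix.mul_assoc, diagonal_mul_diagonal, ← hker]

theorem exists_polar_decomposition (A : Matrix n n ℂ) :
    ∃ W : Matrix n n ℂ, ‖W‖ ≤ 1 ∧ A = W * CFC.sqrt (Aᴴ * A) ∧ Wᴴ * A = CFC.sqrt (Aᴴ * A) := by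
  have hH := posSemidef_conjTranspose_mul_self A
  have hspec := hH.1.spectral_theorem
  have hsqrt := hH.sqrt_eq_cfcSqrt
  rw [Unitary.conjStarAlgAut_apply] at hspec
  rw [Matrix.PosSemidef.sqrt] at hsqrt
  set U : Matrix n n ℂ := (hH.1.eigenvectorUnitary : Matrix n n ℂ)
  have hU : U ∈ unitary (Matrix n n ℂ) := hH.1.eigenvectorUnitary.2
  have hUU : star U * U = 1 := Unitary.star_mul_self_of_mem hU
  have hUU' : U * star U = 1 := Unitary.mul_star_self_of_mem hU
  have hev : ∀ i, 0 ≤ hH.1.eigenvalues i := hH.eigenvalues_nonneg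
  set ev := hH.1.eigenvalues
  set σ : n → ℝ := fun i => √(ev i)
  have hgram : (A * U)ᴴ * (A * U) = diagonal fun i => (σ i : ℂ) * σ i := by
    calc (A * U)ᴴ * (A * U) = star U * (Aᴴ * A) * U := by
          rw [conjTranspose_mul, star_eq_conjTranspose]; simp only [Matrix.mul_assoc]
      _ = (star U * U) * diagonal (RCLike.ofReal ∘ ev) * (star U * U) := by
          rw [hspec]; simp only [Matrix.mul_assoc]
      _ = _ := by
          rw [hUU, Matrix.one_mul, Matrix.mul_one]
          congr 1; funext i
          simp [σ, ← Complex.ofReal_mul, Real.mul_self_sqrt (hev i)]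
  obtain ⟨V, hV, hAU, hVAU⟩ := exists_polar_of_conjTranspose_mul_self_eq_diagonal hgram
  refine ⟨V * star U, ?_, ?_, ?_⟩
  · rwa [CStarRing.norm_mul_mem_unitary _ (Unitary.star_mem hU)]
  · calc A = A * U * star U := by rw [Matrix.mul_assoc, hUU', Matrix.mul_one]
      _ = V * star U * (U * diagonal (fun i => (σ i : ℂ)) * star U) := by
          rw [hAU]; simp only [Matrix.mul_assoc, ← Matrix.mul_assoc (star U) U, hUU, Matrix.one_mul]
      _ = _ := by rw [← hsqrt]; rfl
  · calc (V * star U)ᴴ * A = U * (Vᴴ * (A * U)) * star U := by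
          rw [conjTranspose_mul, ← star_eq_conjTranspose (star U), star_star]
          simp only [Matrix.mul_assoc, hUU', Matrix.mul_one]
      _ = _ := by rw [hVAU, ← hsqrt]; rfl

lemma norm_trace_mul_le (M : Matrix n n ℂ) {P : Matrix n n ℂ} (hP : P.PosSemidef) :
    ‖(M * P).trace‖ ≤ ‖M‖ * P.trace.re := by
  have hspec := hP.1.spectral_theorem
  have htr := hP.1.trace_eq_sum_eigenvalues
  rw [Unitary.conjStarAlgAut_apply] at hspec
  have hμ : ∀ i, 0 ≤ hP.1.eigenvalues i := hP.eigenvalues_nonneg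
  set U : Matrix n n ℂ := (hP.1.eigenvectorUnitary : Matrix n n ℂ)
  have hU : U ∈ unitary (Matrix n n ℂ) := hP.1.eigenvectorUnitary.2
  set μ := hP.1.eigenvalues
  have hUMU : ‖star U * M * U‖ = ‖M‖ := by
    rw [CStarRing.norm_mul_mem_unitary _ hU, CStarRing.norm_mem_unitary_mul _ (Unitary.star_mem hU)]
  calc ‖(M * P).trace‖ = ‖∑ i, (star U * M * U) i i * μ i‖ := by
        rw [hspec, ← Matrix.mul_assoc, ← Matrix.mul_assoc, trace_mul_cycle, ← Matrix.mul_assoc]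
        simp [Matrix.trace, mul_diagonal]
    _ ≤ ∑ i, ‖M‖ * μ i := by
        refine (norm_sum_le _ _).trans (Finset.sum_le_sum fun i _ => ?_)
        rw [norm_mul, Complex.norm_real, Real.norm_of_nonneg (hμ i), ← hUMU]
        exact mul_le_mul_of_nonneg_right (norm_apply_le_l2_opNorm _ i i) (hμ i)
    _ = ‖M‖ * P.trace.re := by
        rw [← Finset.mul_sum, htr, Complex.re_sum]
        simp

lemma norm_trace_mul_le_traceNorm (M A : Matrix n n ℂ) :
    ‖(M * A).trace‖ ≤ ‖M‖ * traceNorm A := by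
  obtain ⟨W, hW, hA, -⟩ := exists_polar_decomposition A
  have hP := (CFC.sqrt_nonneg (Aᴴ * A)).posSemidef
  rw [traceNorm_eq_re_trace_cfcSqrt]
  calc ‖(M * A).trace‖ = ‖(M * W * CFC.sqrt (Aᴴ * A)).trace‖ := by
        rw [Matrix.mul_assoc, ← hA]
    _ ≤ ‖M * W‖ * (CFC.sqrt (Aᴴ * A)).trace.re := norm_trace_mul_le _ hP
    _ ≤ ‖M‖ * (CFC.sqrt (Aᴴ * A)).trace.re := by
        gcongr
        · exact (Complex.nonneg_iff.mp hP.trace_nonneg).1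
        · exact (norm_mul_le M W).trans (mul_le_of_le_one_right (norm_nonneg M) hW)

lemma traceNorm_add_le (A B : Matrix n n ℂ) : traceNorm (A + B) ≤ traceNorm A + traceNorm B := by
  obtain ⟨W, hW, -, hWAB⟩ := exists_polar_decomposition (A + B)
  have hW' : ‖Wᴴ‖ ≤ 1 := by rwa [l2_opNorm_conjTranspose]
  calc traceNorm (A + B) = ((Wᴴ * A).trace + (Wᴴ * B).trace).re := by
        rw [← trace_add, ← Matrix.mul_add, hWAB, traceNorm_eq_re_trace_cfcSqrt]
    _ ≤ ‖(Wᴴ * A).trace‖ + ‖(Wᴴ * B).trace‖ :=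
        (Complex.re_le_norm _).trans (norm_add_le _ _)
    _ ≤ traceNorm A + traceNorm B := by
        gcongr <;> exact (norm_trace_mul_le_traceNorm _ _).trans
          (mul_le_of_le_one_left (traceNorm_nonneg _) hW')

noncomputable def traceNormSeminorm : Seminorm ℂ (Matrix n n ℂ) where
  toFun := traceNorm
  map_zero' := by simpa using traceNorm_smul 0 (0 : Matrix n n ℂ)
  add_le' := traceNorm_add_le
  neg' A := by simpa using traceNorm_smul (-1) A
  smul' := traceNorm_smul

@[simp]
lemma traceNormSeminorm_apply (A : Matrix n n ℂ) : traceNormSeminorm A = traceNorm A := rfl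

lemma traceNorm_sum_le {ι : Type*} (s : Finset ι) (A : ι → Matrix n n ℂ) :
    traceNorm (∑ i ∈ s, A i) ≤ ∑ i ∈ s, traceNorm (A i) :=
  Finset.le_sum_of_subadditive traceNormSeminorm (map_zero _).le (map_add_le_add _) s A

end TraceNorm

section Polarization

open Complex

variable {E : Type*} [AddCommGroup E] [Module ℂ E] {f : ℂ → E} {s x y : E}

lemma four_smul_eq_polarization (hf : ∀ ω, f ω = s + ω • x + star ω • y) :
    (4 : ℂ) • x = f 1 - f (-1) - I • f I + I • f (-I) := by
  simp only [hf, star_one, star_neg, star_def, conj_I, neg_neg, smul_add, smul_smul, I_mul_I,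
    mul_neg]
  module

lemma sum_polarization (hf : ∀ ω, f ω = s + ω • x + star ω • y) :
    f 1 + f (-1) + f I + f (-I) = (4 : ℂ) • s := by
  simp only [hf, star_one, star_neg, star_def, conj_I, neg_neg]
  module

lemma Seminorm.four_mul_le_polarization (p : Seminorm ℂ E)
    (hf : ∀ ω, f ω = s + ω • x + star ω • y) :
    4 * p x ≤ p (f 1) + p (f (-1)) + p (f I) + p (f (-I)) := by
  calc 4 * p x = p ((4 : ℂ) • x) := by rw [map_smul_eq_mul]; norm_num
    _ = p (f 1 - f (-1) - I • f I + I • f (-I)) := by rw [four_smul_eq_polarization hf]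
    _ ≤ _ := by
      have h₁ := map_add_le_add p (f 1 - f (-1) - I • f I) (I • f (-I))
      have h₂ := map_sub_le_add p (f 1 - f (-1)) (I • f I)
      have h₃ := map_sub_le_add p (f 1) (f (-1))
      simp only [map_smul_eq_mul, norm_I, one_mul] at h₁ h₂
      linarith

end Polarization

section Block

variable {m m' : Type*} [Fintype m] [Fintype m'] [DecidableEq m] [DecidableEq m']

lemma conjTranspose_one_submatrix_mul_mul (ρ : Matrix (m × m') (m × m') ℂ) (i j : m) :
    ((1 : Matrix (m × m') (m × m') ℂ).submatrix id (i, ·))ᴴ * ρ *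
      (1 : Matrix (m × m') (m × m') ℂ).submatrix id (j, ·) = ρ.submatrix (i, ·) (j, ·) := by
  rw [conjTranspose_submatrix, conjTranspose_one, ← Equiv.coe_refl, mul_submatrix_one,
    one_submatrix_mul]
  rfl

lemma posSemidef_polarization_blocks {ρ : Matrix (m × m') (m × m') ℂ} (hρ : ρ.PosSemidef)
    (i j : m) {ω : ℂ} (hω : ‖ω‖ = 1) :
    (ρ.submatrix (i, ·) (i, ·) + ρ.submatrix (j, ·) (j, ·) + ω • ρ.submatrix (i, ·) (j, ·) +
      star ω • ρ.submatrix (j, ·) (i, ·)).PosSemidef := by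
  -- `E k` embeds `m' → ℂ` as the `k`-th block, so this is the compression of `ρ` by
  -- `(e i + ω e j) ⊗ 1`.
  set E : m → Matrix (m × m') m' ℂ := fun k => (1 : Matrix (m × m') (m × m') ℂ).submatrix id (k, ·)
  have hω' : ω * star ω = 1 := by simp [Complex.mul_conj', hω]
  convert hρ.conjTranspose_mul_mul_same (E i + ω • E j) using 1
  simp only [conjTranspose_add, conjTranspose_smul, Matrix.add_mul, Matrix.mul_add,
    Matrix.smul_mul, Matrix.mul_smul, smul_add, smul_smul, hω', one_smul, E,
    conjTranspose_one_submatrix_mul_mul]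
  abel

theorem traceNorm_map_submatrix_le {k : Type*} [Fintype k] [DecidableEq k]
    (Φ : Matrix m' m' ℂ →ₗ[ℂ] Matrix k k ℂ) {c : ℝ}
    (hΦ : ∀ σ : Matrix m' m' ℂ, σ.PosSemidef → traceNorm (Φ σ) ≤ c * σ.trace.re)
    {ρ : Matrix (m × m') (m × m') ℂ} (hρ : ρ.PosSemidef) (i j : m) :
    traceNorm (Φ (ρ.submatrix (i, ·) (j, ·))) ≤
      c * ((ρ.submatrix (i, ·) (i, ·)).trace.re + (ρ.submatrix (j, ·) (j, ·)).trace.re) := by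
  set s := ρ.submatrix (i, ·) (i, ·) + ρ.submatrix (j, ·) (j, ·)
  set M : ℂ → Matrix m' m' ℂ := fun ω =>
    s + ω • ρ.submatrix (i, ·) (j, ·) + star ω • ρ.submatrix (j, ·) (i, ·)
  have hM : ∀ ω, ‖ω‖ = 1 → traceNorm (Φ (M ω)) ≤ c * (M ω).trace.re := fun ω hω =>
    hΦ _ (posSemidef_polarization_blocks hρ i j hω)
  have hpol := traceNormSeminorm.four_mul_le_polarization (f := fun ω => Φ (M ω)) (s := Φ s)
    (x := Φ (ρ.submatrix (i, ·) (j, ·))) (y := Φ (ρ.submatrix (j, ·) (i, ·)))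
    (fun ω => by simp only [M, map_add, map_smul])
  have hsum := congrArg (fun A => A.trace.re) (sum_polarization (f := M) fun ω => rfl)
  simp only [traceNormSeminorm_apply] at hpol
  simp only [trace_add, trace_smul, smul_eq_mul, Complex.add_re, Complex.mul_re,
    Complex.re_ofNat, Complex.im_ofNat, zero_mul, sub_zero, s] at hsum
  have h1 := hM 1 (by simp)
  have h2 := hM (-1) (by simp)
  have h3 := hM Complex.I (by simp)
  have h4 := hM (-Complex.I) (by simp)
  linear_combination (hpol + h1 + h2 + h3 + h4 + c * hsum) / 4

lemma traceNorm_submatrix_le {ρ : Matrix (m × m') (m × m') ℂ} (hρ : ρ.PosSemidef) (i j : m) :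
    traceNorm (ρ.submatrix (i, ·) (j, ·)) ≤
      (ρ.submatrix (i, ·) (i, ·)).trace.re + (ρ.submatrix (j, ·) (j, ·)).trace.re := by
  simpa using traceNorm_map_submatrix_le LinearMap.id (c := 1)
    (fun σ hσ => (traceNorm_eq_re_trace hσ).trans_le (one_mul _).symm.le) hρ i j

end Block

section Superoperator

variable {m m' : Type*} [Fintype m] [Fintype m']

noncomputable def appSLin (S : Matrix (m × m) (m × m) ℂ) : Matrix m m ℂ →ₗ[ℂ] Matrix m m ℂ where
  toFun := appS S
  map_add' ρ σ := by ext i j; simp [appS, mul_add, Finset.sum_add_distrib]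
  map_smul' c ρ := by ext i j; simp [appS, Finset.mul_sum, mul_left_comm]

@[simp]
lemma appSLin_apply (S : Matrix (m × m) (m × m) ℂ) (ρ : Matrix m m ℂ) : appSLin S ρ = appS S ρ :=
  rfl

lemma appS_sub_left (S₁ S₂ : Matrix (m × m) (m × m) ℂ) (ρ : Matrix m m ℂ) :
    appS (S₁ - S₂) ρ = appS S₁ ρ - appS S₂ ρ := by
  ext i j
  simp [appS, sub_mul, Finset.sum_sub_distrib]

lemma kronS_sub_left (S₁ S₂ : Matrix (m × m) (m × m) ℂ) (S' : Matrix (m' × m') (m' × m') ℂ) :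
    kronS (S₁ - S₂) S' = kronS S₁ S' - kronS S₂ S' := by
  ext p q
  simp [kronS, sub_mul]

lemma IsDensityMatrix.re_apply_self_le_one {σ : Matrix m m ℂ} (hσ : IsDensityMatrix σ) (i : m) :
    (σ i i).re ≤ 1 := by
  have hdiag : ∀ k, 0 ≤ (σ k k).re := fun k => (Complex.nonneg_iff.mp hσ.1.diag_nonneg).1
  calc (σ i i).re ≤ ∑ k, (σ k k).re := Finset.single_le_sum (fun k _ => hdiag k) (Finset.mem_univ i)
    _ = 1 := by rw [← Complex.re_sum]; exact congrArg Complex.re hσ.2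

variable [DecidableEq m] [DecidableEq m']

lemma appS_single_one_apply (S : Matrix (m × m) (m × m) ℂ) (i j a c : m) :
    appS S (single i j 1) a c = S (a, c) (i, j) := by
  simp [appS, single_apply, Fintype.sum_prod_type, ite_and]

open Kronecker in
lemma appS_kronS_one (S : Matrix (m × m) (m × m) ℂ) (ρ : Matrix (m × m') (m × m') ℂ) :
    appS (kronS S 1) ρ =
      ∑ p : m × m, appS S (single p.1 p.2 1) ⊗ₖ ρ.submatrix (p.1, ·) (p.2, ·) := by
  ext ⟨a, b⟩ ⟨c, e⟩
  simp only [Matrix.sum_apply, kroneckerMap_apply, appS_single_one_apply, submatrix_apply]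
  simp [appS, kronS, one_apply, Fintype.sum_prod_type, ite_and, Finset.sum_ite_irrel]

lemma trDist_appS (T Tφ : Matrix (m × m) (m × m) ℂ) (ρ : Matrix m m ℂ) :
    trDist (appS T ρ) (appS Tφ ρ) = traceNorm (appS (T - Tφ) ρ) / 2 := by
  rw [trDist, appS_sub_left]

lemma norm_apply_le_of_posSemidef {σ : Matrix m m ℂ} (hσ : σ.PosSemidef) (i j : m) :
    ‖σ i j‖ ≤ (σ i i).re + (σ j j).re := by
  -- View `σ` as a block matrix with `1 × 1` blocks.
  have hσ' : (σ.submatrix Prod.fst Prod.fst : Matrix (m × Unit) (m × Unit) ℂ).PosSemidef :=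
    hσ.submatrix _
  have hblock : ∀ k l : m,
      (σ.submatrix Prod.fst Prod.fst : Matrix (m × Unit) (m × Unit) ℂ).submatrix (k, ·) (l, ·) =
        σ k l • (1 : Matrix Unit Unit ℂ) := fun k l => by ext; simp
  have h := traceNorm_submatrix_le hσ' i j
  simp only [hblock, traceNorm_smul, traceNorm_eq_re_trace PosSemidef.one,
    trace_smul, trace_one] at h
  simpa using h

lemma traceNorm_appS_le_sum (S : Matrix (m × m) (m × m) ℂ) (σ : Matrix m m ℂ) :
    traceNorm (appS S σ) ≤ ∑ p : m × m, ‖σ p.1 p.2‖ * traceNorm (appS S (single p.1 p.2 1)) := by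
  have hexp : appS S σ = ∑ p : m × m, σ p.1 p.2 • appS S (single p.1 p.2 1) := by
    simp only [← appSLin_apply, ← map_smul, ← map_sum]
    conv_lhs => rw [matrix_eq_sum_single σ]
    simp [Fintype.sum_prod_type, smul_single]
  rw [hexp]
  refine (traceNorm_sum_le _ _).trans_eq (Finset.sum_congr rfl fun p _ => ?_)
  rw [traceNorm_smul]

open Kronecker in
theorem traceNorm_appS_kronS_one_le {S : Matrix (m × m) (m × m) ℂ} {c : ℝ}
    (hc : ∀ i j, traceNorm (appS S (single i j 1)) ≤ c)
    {ρ : Matrix (m × m') (m × m') ℂ} (hρ : ρ.PosSemidef) :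
    traceNorm (appS (kronS S 1) ρ) ≤ 2 * Fintype.card m * c * ρ.trace.re := by
  set t : m → ℝ := fun i => (ρ.submatrix (i, ·) (i, ·)).trace.re
  have htr : ∑ i, t i = ρ.trace.re := by
    simp [t, Matrix.trace, Fintype.sum_prod_type, Complex.re_sum]
  rw [appS_kronS_one]
  calc _ ≤ ∑ p : m × m, c * (t p.1 + t p.2) := by
        refine (traceNorm_sum_le _ _).trans (Finset.sum_le_sum fun p _ => ?_)
        rw [traceNorm_kronecker]
        exact mul_le_mul (hc _ _) (traceNorm_submatrix_le hρ _ _) (traceNorm_nonneg _)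
          ((traceNorm_nonneg _).trans (hc p.1 p.2))
    _ = 2 * Fintype.card m * c * ρ.trace.re := by
        rw [← Finset.mul_sum, Fintype.sum_prod_type]
        simp [Finset.sum_add_distrib, ← Finset.mul_sum, htr]
        ring

end Superoperator

section Contraction

variable {m : Type*} [Fintype m] [DecidableEq m] (T Tφ : Matrix (m × m) (m × m) ℂ)

lemma bddAbove_trDist_appS : BddAbove (Set.range fun ρ : {ρ : Matrix m m ℂ // IsDensityMatrix ρ} =>
    trDist (appS T ρ.1) (appS Tφ ρ.1)) := by
  refine ⟨∑ p : m × m, traceNorm (appS (T - Tφ) (single p.1 p.2 1)), ?_⟩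
  rintro _ ⟨⟨σ, hσ⟩, rfl⟩
  dsimp only
  rw [trDist_appS, div_le_iff₀ two_pos, Finset.sum_mul]
  refine (traceNorm_appS_le_sum _ σ).trans (Finset.sum_le_sum fun p _ => ?_)
  rw [mul_comm]
  refine mul_le_mul_of_nonneg_left ?_ (traceNorm_nonneg _)
  linarith [norm_apply_le_of_posSemidef hσ.1 p.1 p.2, hσ.re_apply_self_le_one p.1,
    hσ.re_apply_self_le_one p.2]

lemma trDist_appS_le_etaTR {ρ : Matrix m m ℂ} (hρ : IsDensityMatrix ρ) :
    trDist (appS T ρ) (appS Tφ ρ) ≤ etaTR T Tφ :=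
  le_ciSup (bddAbove_trDist_appS T Tφ) ⟨ρ, hρ⟩

lemma etaTR_nonneg : 0 ≤ etaTR T Tφ :=
  Real.iSup_nonneg fun _ => div_nonneg (traceNorm_nonneg _) two_pos.le

lemma traceNorm_appS_sub_le {σ : Matrix m m ℂ} (hσ : σ.PosSemidef) :
    traceNorm (appS (T - Tφ) σ) ≤ 2 * etaTR T Tφ * σ.trace.re := by
  set t := σ.trace.re
  have htr : σ.trace = t := Complex.ext rfl (Complex.nonneg_iff.mp hσ.trace_nonneg).2.symm
  have ht : 0 ≤ t := (Complex.nonneg_iff.mp hσ.trace_nonneg).1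
  rcases ht.eq_or_lt with ht | ht
  · have hσ0 : σ = 0 := hσ.trace_eq_zero_iff.mp (by rw [htr, ← ht, Complex.ofReal_zero])
    rw [hσ0, ← ht, mul_zero, ← appSLin_apply, map_zero, ← traceNormSeminorm_apply, map_zero]
  · have hτ : IsDensityMatrix ((t : ℂ)⁻¹ • σ) := by
      refine ⟨hσ.smul ?_, ?_⟩
      · exact inv_nonneg.mpr (Complex.zero_le_real.mpr ht.le)
      · rw [trace_smul, htr, smul_eq_mul, inv_mul_cancel₀ (by exact_mod_cast ht.ne')]
    have h := trDist_appS_le_etaTR T Tφ hτ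
    rw [trDist_appS, ← appSLin_apply, map_smul, traceNorm_smul, appSLin_apply, norm_inv,
      Complex.norm_of_nonneg ht.le, div_le_iff₀ two_pos, inv_mul_le_iff₀ ht] at h
    linarith

lemma traceNorm_appS_sub_single_le (i j : m) :
    traceNorm (appS (T - Tφ) (single i j 1)) ≤ 4 * etaTR T Tφ := by
  -- `vecMulVec v (star v) = ∑ k l, E k l ⊗ E k l` is positive and its blocks are the `E k l`.
  set v : m × m → ℂ := fun p => if p.1 = p.2 then 1 else 0
  have hΩ : ∀ k l, (vecMulVec v (star v)).submatrix (k, ·) (l, ·) = single k l (1 : ℂ) := by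
    intro k l; ext a b
    by_cases hka : k = a <;> by_cases hlb : l = b <;> simp [v, vecMulVec_apply, *]
  have h := traceNorm_map_submatrix_le (appSLin (T - Tφ)) (c := 2 * etaTR T Tφ)
    (fun σ hσ => traceNorm_appS_sub_le T Tφ hσ) (posSemidef_vecMulVec_self_star v) i j
  simp only [hΩ, appSLin_apply, trace_single_eq_same, Complex.one_re] at h
  linarith

end Contraction

theorem contraction_tensor_identity_general {d d' : ℕ}
    (T Tφ : Matrix (Fin d × Fin d) (Fin d × Fin d) ℂ) :
    etaTR (kronS T (1 : Matrix (Fin d' × Fin d') (Fin d' × Fin d') ℂ)) (kronS Tφ 1) ≤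
      4 * d * etaTR T Tφ := by
  refine Real.iSup_le (fun ⟨ρ, hρ⟩ => ?_) (by have := etaTR_nonneg T Tφ; positivity)
  have h := traceNorm_appS_kronS_one_le (traceNorm_appS_sub_single_le T Tφ) hρ.1
  rw [hρ.2, Complex.one_re, Fintype.card_fin] at h
  rw [trDist_appS, ← kronS_sub_left]
  linarith

/-- **Stabilization of the contraction under tensoring with the identity.** -/
theorem contraction_tensor_identity {d d' : ℕ}
    (T Tφ : Matrix (Fin d × Fin d) (Fin d × Fin d) ℂ)
    (hT : IsQChannelM T) (hTφ : IsPeriphProjM T Tφ) :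
    etaTR (kronS T (1 : Matrix (Fin d' × Fin d') (Fin d' × Fin d') ℂ)) (kronS Tφ 1) ≤
      4 * d * etaTR T Tφ :=
  contraction_tensor_identity_general T Tφ
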